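/- arXiv:1606.03953 — 4 statements merged into one kernel-verified Lean document; each statement's English description precedes it below -/
import Mathlib

section
/- Let X be a finite set of size n and let w : X → ℝ be a weight function with 0 ≤ w(x) ≤ M for all x ∈ X. Then for every m ≤ n there is a partition of X into parts X₁, …, X_m such that |X_i| ≤ ⌈2n/m⌉ and the total weight w(X_i) := Σ_{x∈X_i} w(x) satisfies w(X_i) ≤ 2·w(X)/m + M for all i ∈ [m]. -/
/-!
Sort `X` by decreasing weight and deal its elements round-robin into the `m` parts. Every element
of a part other than its first weighs at most the average of the `m` elements dealt just before
it, and these windows of `m` elements are disjoint, so a part weighs at most `M + w(X)/m`.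
-/

open Finset

theorem Finset.exists_antitoneOn_enum {α β : Type*} [DecidableEq α] [Nonempty α]
    [LinearOrder β] (s : Finset α) (w : α → β) :
    ∃ e : ℕ → α, Set.InjOn e (Set.Iio #s) ∧ (range #s).image e = s ∧
      AntitoneOn (w ∘ e) (Set.Iio #s) := by
  set e₀ : Fin #s → α := fun j => s.equivFin.symm j
  set σ := Tuple.sort (fun j => OrderDual.toDual (w (e₀ j)))
  have hσ : Monotone _ := Tuple.monotone_sort (fun j => OrderDual.toDual (w (e₀ j)))
  have he₀ : Function.Injective e₀ := Subtype.val_injective.comp s.equivFin.symm.injective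
  set e : ℕ → α := fun j => if h : j < #s then e₀ (σ ⟨j, h⟩) else Classical.arbitrary α
  have he : Set.InjOn e (Set.Iio #s) := by
    intro a ha b hb hab
    simp only [Set.mem_Iio] at ha hb
    exact congrArg Fin.val (σ.injective (he₀ (by simpa [e, ha, hb] using hab)) :)
  refine ⟨e, he, eq_of_subset_of_card_le ?_ ?_, ?_⟩
  · intro x hx
    obtain ⟨j, hj, rfl⟩ := mem_image.1 hx
    simp [e, mem_range.1 hj, e₀]
  · rw [card_image_of_injOn (by simpa using he), card_range]
  · intro a ha b hb hab
    simp only [Set.mem_Iio] at ha hb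
    simpa [e, ha, hb] using hσ (Fin.mk_le_mk.2 hab)

theorem nsmul_sum_le_sum_range_of_separated {β : Type*} [AddCommMonoid β] [PartialOrder β]
    [IsOrderedAddMonoid β] {f : ℕ → β} {n m : ℕ} {S : Finset ℕ}
    (hf : AntitoneOn f (Set.Iio n)) (hf0 : ∀ j < n, 0 ≤ f j)
    (hS : ∀ j ∈ S, m ≤ j ∧ j < n) (hsep : ∀ a ∈ S, ∀ b ∈ S, a < b → a + m ≤ b) :
    m • ∑ j ∈ S, f j ≤ ∑ j ∈ range n, f j := by
  have hdisj : (S : Set ℕ).PairwiseDisjoint fun j => Ico (j - m) j := by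
    intro a ha b hb hab
    simp only [Function.onFun, disjoint_left, mem_Ico]
    rcases hab.lt_or_gt with h | h
    · have := hsep a ha b hb h; omega
    · have := hsep b hb a ha h; omega
  calc m • ∑ j ∈ S, f j = ∑ j ∈ S, m • f j := smul_sum
    _ ≤ ∑ j ∈ S, ∑ t ∈ Ico (j - m) j, f t := by
      refine sum_le_sum fun j hj => ?_
      obtain ⟨hmj, hjn⟩ := hS j hj
      have hcard : #(Ico (j - m) j) = m := by rw [Nat.card_Ico]; omega
      have hwindow := card_nsmul_le_sum (Ico (j - m) j) f (f j) fun t ht => by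
        have ht := mem_Ico.1 ht
        exact hf (by simp only [Set.mem_Iio]; omega) (Set.mem_Iio.2 hjn) ht.2.le
      rwa [hcard] at hwindow
    _ = ∑ t ∈ S.biUnion fun j => Ico (j - m) j, f t := (sum_biUnion hdisj).symm
    _ ≤ ∑ t ∈ range n, f t := by
      refine sum_le_sum_of_subset_of_nonneg (fun t ht => ?_) fun t ht _ => hf0 t (mem_range.1 ht)
      obtain ⟨j, hj, ht⟩ := mem_biUnion.1 ht
      have := (hS j hj).2
      have := mem_Ico.1 ht
      exact mem_range.2 (by omega)

theorem sum_filter_mod_eq_le {K : Type*} [Field K] [LinearOrder K] [IsStrictOrderedRing K]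
    {f : ℕ → K} {n m i : ℕ} (hf : AntitoneOn f (Set.Iio n))
    (hf0 : ∀ j < n, 0 ≤ f j) (hm : 0 < m) (hi : i < n) :
    ∑ j ∈ range n with j % m = i, f j ≤ f i + (∑ j ∈ range n, f j) / m := by
  rw [← sum_filter_add_sum_filter_not _ (m ≤ ·), add_comm]
  gcongr
  · have hsub : {j ∈ {j ∈ range n | j % m = i} | ¬m ≤ j} ⊆ {i} := by
      intro j hj
      simp only [mem_filter, mem_range, not_le] at hj
      rw [mem_singleton, ← hj.1.2, Nat.mod_eq_of_lt hj.2]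
    refine (sum_le_sum_of_subset_of_nonneg hsub fun j hj _ => ?_).trans (sum_singleton f i).le
    exact mem_singleton.1 hj ▸ hf0 i hi
  · rw [le_div_iff₀ (by exact_mod_cast hm), mul_comm, ← nsmul_eq_mul]
    refine nsmul_sum_le_sum_range_of_separated hf hf0 (fun j hj => ?_) fun a ha b hb hab => ?_
    · simp only [mem_filter, mem_range] at hj
      exact ⟨hj.2, hj.1.1⟩
    · simp only [mem_filter] at ha hb
      exact Nat.ModEq.add_le_of_lt (ha.1.2.trans hb.1.2.symm) hab

theorem card_filter_mod_eq_le (n : ℕ) {m i : ℕ} (hm : 0 < m) (hi : i < m) :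
    #{j ∈ range n | j % m = i} ≤ n / m + 1 := by
  have := Nat.count_modEq_card n hm i
  rw [Nat.count_eq_card_filter_range] at this
  simp only [Nat.ModEq, Nat.mod_eq_of_lt hi] at this
  rw [this]
  split_ifs <;> omega

theorem div_add_one_le_ceil_two_mul_div {n m : ℕ} (hm : 0 < m) (hmn : m ≤ n) :
    n / m + 1 ≤ ⌈2 * (n : ℝ) / m⌉₊ := by
  have hm' : (0 : ℝ) < m := by exact_mod_cast hm
  have hdiv : ((n / m : ℕ) : ℝ) ≤ n / m := Nat.cast_div_le
  have hone : (1 : ℝ) ≤ n / m := by rw [le_div_iff₀ hm', one_mul]; exact_mod_cast hmn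
  have hle : ((n / m + 1 : ℕ) : ℝ) ≤ 2 * n / m := by
    rw [mul_div_assoc]; push_cast; linarith
  exact_mod_cast hle.trans (Nat.le_ceil _)

theorem disjoint_image_filter_mod_eq {α : Type*} [DecidableEq α] {e : ℕ → α} {n m i i' : ℕ}
    (he : Set.InjOn e (Set.Iio n)) (hii' : i ≠ i') :
    Disjoint ({j ∈ range n | j % m = i}.image e) ({j ∈ range n | j % m = i'}.image e) := by
  refine disjoint_left.2 fun x hx hx' => hii' ?_
  obtain ⟨j, hj, rfl⟩ := mem_image.1 hx
  obtain ⟨j', hj', hjj'⟩ := mem_image.1 hx'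
  simp only [mem_filter, mem_range] at hj hj'
  rw [← hj.2, ← hj'.2, he hj'.1 hj.1 hjj']

theorem biUnion_image_filter_mod_eq {α : Type*} [DecidableEq α] (e : ℕ → α) (n : ℕ)
    {m : ℕ} (hm : 0 < m) :
    univ.biUnion (fun i : Fin m => {j ∈ range n | j % m = i}.image e) = (range n).image e := by
  rw [← biUnion_image]
  congr 1
  ext j
  simp only [mem_biUnion, mem_univ, mem_filter, true_and]
  exact ⟨fun ⟨_, hj, _⟩ => hj, fun hj => ⟨⟨j % m, Nat.mod_lt j hm⟩, hj, rfl⟩⟩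

theorem stmt_0_general (α : Type*) [DecidableEq α] (X : Finset α) (n m : ℕ) (M : ℝ)
    (w : α → ℝ) (hn : X.card = n)
    (hw : ∀ x ∈ X, 0 ≤ w x ∧ w x ≤ M) (hm : 1 ≤ m) (hmn : m ≤ n) :
    ∃ P : Fin m → Finset α,
      (∀ i j, i ≠ j → Disjoint (P i) (P j)) ∧
      (Finset.univ.biUnion P = X) ∧
      (∀ i, (P i).card ≤ ⌈(2 * (n : ℝ)) / (m : ℝ)⌉₊ ∧
        ∑ x ∈ P i, w x ≤ 2 * (∑ x ∈ X, w x) / (m : ℝ) + M) := by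
  obtain ⟨x₀, -⟩ : X.Nonempty := card_pos.1 (by omega)
  have : Nonempty α := ⟨x₀⟩
  obtain ⟨e, he, himg, hanti⟩ := X.exists_antitoneOn_enum w
  rw [hn] at he himg hanti
  have hinj : Set.InjOn e (range n) := by rwa [coe_range]
  have hw' : ∀ j < n, 0 ≤ w (e j) ∧ w (e j) ≤ M := fun j hj =>
    hw _ (himg ▸ mem_image_of_mem e (mem_range.2 hj))
  refine ⟨fun i => {j ∈ range n | j % m = i}.image e,
    fun i i' h => disjoint_image_filter_mod_eq he (Fin.val_injective.ne h),
    (biUnion_image_filter_mod_eq e n hm).trans himg, fun i => ⟨?_, ?_⟩⟩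
  · exact card_image_le.trans ((card_filter_mod_eq_le n hm i.2).trans
      (div_add_one_le_ceil_two_mul_div hm hmn))
  · have hi : (i : ℕ) < n := i.2.trans_le hmn
    have hW : 0 ≤ (∑ x ∈ X, w x) / m :=
      div_nonneg (sum_nonneg fun x hx => (hw x hx).1) m.cast_nonneg
    calc ∑ x ∈ {j ∈ range n | j % m = i}.image e, w x
        = ∑ j ∈ range n with j % m = i, w (e j) := sum_image (hinj.mono (filter_subset _ _))
      _ ≤ w (e i) + (∑ j ∈ range n, w (e j)) / m :=
        sum_filter_mod_eq_le hanti (fun j hj => (hw' j hj).1) hm hi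
      _ = w (e i) + (∑ x ∈ X, w x) / m := by rw [← himg, sum_image hinj]
      _ ≤ 2 * (∑ x ∈ X, w x) / m + M := by rw [mul_div_assoc]; linarith [(hw' i hi).2]

/-- Proposition 2.10: partitioning a weighted finite set into `m` parts with balanced
sizes and balanced total weights. -/
theorem stmt_0 (α : Type*) [DecidableEq α] (X : Finset α) (n m : ℕ) (M : ℝ)
    (w : α → ℝ) (hn : X.card = n) (hM : 0 ≤ M)
    (hw : ∀ x ∈ X, 0 ≤ w x ∧ w x ≤ M) (hm : 1 ≤ m) (hmn : m ≤ n) :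
    ∃ P : Fin m → Finset α,
      (∀ i j, i ≠ j → Disjoint (P i) (P j)) ∧
      (Finset.univ.biUnion P = X) ∧
      (∀ i, (P i).card ≤ ⌈(2 * (n : ℝ)) / (m : ℝ)⌉₊ ∧
        ∑ x ∈ P i, w x ≤ 2 * (∑ x ∈ X, w x) / (m : ℝ) + M) :=
  stmt_0_general α X n m M w hn hw hm hmn
end

section
/- Let G be a bipartite graph with vertex partition (A, B) in which every vertex of B has even degree. Then the edge set of G can be decomposed into at most 3·Δ(G) edge-disjoint flocks of seagulls whose wings lie in A (i.e., each path of length 2 has its midpoint in B and both endpoints in A). -/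
lemma pair_decomp {V : Type*} [DecidableEq V] (s : Finset V) (h : Even s.card) :
    ∃ P : Finset (V × V),
      (∀ p ∈ P, p.1 ∈ s ∧ p.2 ∈ s ∧ p.1 ≠ p.2) ∧
      (∀ x ∈ s, ∃! p : V × V, p ∈ P ∧ (x = p.1 ∨ x = p.2)) ∧
      s.card = 2 * P.card := by
  induction s using Finset.strongInduction with
  | _ s ih =>
    rcases s.eq_empty_or_nonempty with rfl | ⟨x, hx⟩
    · exact ⟨∅, by simp, by simp, by simp⟩
    · have h1 : 1 ≤ s.card := Finset.card_pos.2 ⟨x, hx⟩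
      have h2 : 2 ≤ s.card := by
        rcases h with ⟨m, hm⟩; omega
      have hne : (s.erase x).Nonempty := by
        rw [← Finset.card_pos, Finset.card_erase_of_mem hx]; omega
      obtain ⟨y, hy⟩ := hne
      have hyx : y ≠ x := Finset.ne_of_mem_erase hy
      have hys : y ∈ s := Finset.mem_of_mem_erase hy
      set s' := (s.erase x).erase y with hs'
      have hsub : s' ⊂ s := by
        apply Finset.ssubset_of_subset_of_ssubset (Finset.erase_subset _ _)
        exact Finset.erase_ssubset hx
      have hcard : s'.card = s.card - 2 := by
        rw [hs', Finset.card_erase_of_mem hy, Finset.card_erase_of_mem hx]; omega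
      have heven' : Even s'.card := by
        rcases h with ⟨m, hm⟩; rw [hcard]; exact ⟨m - 1, by omega⟩
      obtain ⟨P, hP1, hP2, hP3⟩ := ih s' hsub heven'
      have hxs' : x ∉ s' := by simp [hs']
      have hys' : y ∉ s' := by simp [hs']
      have hnotin : (x, y) ∉ P := fun hmem => hxs' (hP1 _ hmem).1
      refine ⟨insert (x, y) P, ?_, ?_, ?_⟩
      · rintro p hp
        rcases Finset.mem_insert.1 hp with rfl | hp
        · exact ⟨hx, hys, fun hxy => hyx hxy.symm⟩
        · obtain ⟨h1, h2, h3⟩ := hP1 p hp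
          exact ⟨(Finset.erase_subset _ _ ((Finset.erase_subset _ _) h1) : _), Finset.mem_of_mem_erase (Finset.mem_of_mem_erase h2), h3⟩
      · intro z hz
        by_cases hzx : z = x ∨ z = y
        · refine ⟨(x, y), ⟨Finset.mem_insert_self _ _, by simpa using hzx⟩, ?_⟩
          rintro p ⟨hp, hzp⟩
          rcases Finset.mem_insert.1 hp with rfl | hp
          · rfl
          · exfalso
            obtain ⟨h1, h2, _⟩ := hP1 p hp
            rcases hzp with rfl | rfl
            · rcases hzx with rfl | rfl
              · exact hxs' h1
              · exact hys' h1
            · rcases hzx with rfl | rfl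
              · exact hxs' h2
              · exact hys' h2
        · push_neg at hzx
          have hzs' : z ∈ s' := by
            simp [hs', Finset.mem_erase, hzx.1, hzx.2, hz]
          obtain ⟨p, ⟨hp, hzp⟩, huniq⟩ := hP2 z hzs'
          refine ⟨p, ⟨Finset.mem_insert_of_mem hp, hzp⟩, ?_⟩
          rintro q ⟨hq, hzq⟩
          rcases Finset.mem_insert.1 hq with rfl | hq
          · exfalso; rcases hzq with rfl | rfl
            · exact hzx.1 rfl
            · exact hzx.2 rfl
          · exact huniq q ⟨hq, hzq⟩
      · rw [Finset.card_insert_of_notMem hnotin]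
        omega

lemma greedy_color {α : Type*} [DecidableEq α] (R : α → α → Prop) [DecidableRel R]
    (hsym : ∀ a b, R a b → R b a) (d : ℕ) (S : Finset α)
    (hd : ∀ t ∈ S, (S.filter fun t' => t' ≠ t ∧ R t t').card < d) :
    ∃ c : α → ℕ, (∀ t ∈ S, c t < d) ∧
      (∀ t ∈ S, ∀ t' ∈ S, t ≠ t' → R t t' → c t ≠ c t') := by
  induction S using Finset.induction with
  | empty => exact ⟨fun _ => 0, by simp, by simp⟩
  | @insert a S' ha ih =>
    have hd' : ∀ t ∈ S', (S'.filter fun t' => t' ≠ t ∧ R t t').card < d := by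
      intro t ht
      refine lt_of_le_of_lt (Finset.card_le_card ?_) (hd t (Finset.mem_insert_of_mem ht))
      exact Finset.filter_subset_filter _ (Finset.subset_insert _ _)
    obtain ⟨c, hc1, hc2⟩ := ih hd'
    set T := S'.filter (fun t' => R a t') with hT
    have hTcard : T.card < d := by
      refine lt_of_le_of_lt (Finset.card_le_card ?_) (hd a (Finset.mem_insert_self _ _))
      intro t ht
      rw [Finset.mem_filter] at ht ⊢
      exact ⟨Finset.mem_insert_of_mem ht.1, fun h => ha (h ▸ ht.1), ht.2⟩
    have himg : (T.image c).card < d := lt_of_le_of_lt Finset.card_image_le hTcard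
    have hne : ((Finset.range d) \ (T.image c)).Nonempty := by
      rw [← Finset.card_pos]
      have h1 := Finset.card_sdiff_add_card_inter (Finset.range d) (T.image c)
      have h2 : (Finset.range d ∩ T.image c).card ≤ (T.image c).card :=
        Finset.card_le_card Finset.inter_subset_right
      rw [Finset.card_range] at h1
      omega
    obtain ⟨m, hm⟩ := hne
    rw [Finset.mem_sdiff, Finset.mem_range] at hm
    refine ⟨Function.update c a m, ?_, ?_⟩
    · intro t ht
      rcases Finset.mem_insert.1 ht with rfl | ht
      · simpa using hm.1
      · have hta : t ≠ a := fun h => ha (h ▸ ht)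
        rw [Function.update_of_ne hta]
        exact hc1 t ht
    · intro t ht t' ht' htt hR
      rcases Finset.mem_insert.1 ht with h1 | h1 <;>
        rcases Finset.mem_insert.1 ht' with h2 | h2
      · exact absurd (h1.trans h2.symm) htt
      · subst h1
        have hta : t' ≠ t := fun h => ha (h ▸ h2)
        rw [Function.update_self, Function.update_of_ne hta]
        intro h
        exact hm.2 (h ▸ Finset.mem_image_of_mem c (Finset.mem_filter.2 ⟨h2, hR⟩))
      · subst h2
        have hta : t ≠ t' := fun h => ha (h ▸ h1)
        rw [Function.update_self, Function.update_of_ne hta]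
        intro h
        exact hm.2 (h ▸ Finset.mem_image_of_mem c (Finset.mem_filter.2 ⟨h1, hsym _ _ hR⟩))
      · have hta : t ≠ a := fun h => ha (h ▸ h1)
        have hta' : t' ≠ a := fun h => ha (h ▸ h2)
        rw [Function.update_of_ne hta, Function.update_of_ne hta']
        exact hc2 t h1 t' h2 htt hR


/-- Proposition 2.9: a bipartite graph with parts `(A, B)` in which every vertex of `B`
has even degree decomposes into at most `3·Δ(G)` edge-disjoint flocks of seagulls with
wings in `A`.  A seagull is recorded as a triple `(a, b, a')` with midpoint `b ∈ B` and
wings `a, a' ∈ A`. -/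
theorem stmt_1 (V : Type*) [Fintype V] [DecidableEq V]
    (G : SimpleGraph V) [DecidableRel G.Adj]
    (A B : Finset V) (hcover : ∀ v, v ∈ A ∨ v ∈ B) (hdisj : Disjoint A B)
    (hbip : ∀ u v, G.Adj u v → (u ∈ A ∧ v ∈ B) ∨ (u ∈ B ∧ v ∈ A))
    (heven : ∀ b ∈ B, Even (G.degree b)) :
    ∃ (k : ℕ) (F : Fin k → Finset (V × V × V)),
      k ≤ 3 * G.maxDegree ∧
      -- each element of a flock is a seagull with wings in `A` and midpoint in `B`
      (∀ i, ∀ s ∈ F i, s.1 ∈ A ∧ s.2.2 ∈ A ∧ s.2.1 ∈ B ∧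
        G.Adj s.1 s.2.1 ∧ G.Adj s.2.1 s.2.2 ∧ s.1 ≠ s.2.2) ∧
      -- the seagulls within one flock are pairwise vertex-disjoint
      (∀ i, ∀ s ∈ F i, ∀ s' ∈ F i, s ≠ s' →
        ∀ x, x ∈ ({s.1, s.2.1, s.2.2} : Finset V) →
          x ∉ ({s'.1, s'.2.1, s'.2.2} : Finset V)) ∧
      -- every edge of `G` lies in exactly one seagull of exactly one flock
      (∀ e ∈ G.edgeSet, ∃! p : Fin k × (V × V × V), p.2 ∈ F p.1 ∧
        (e = s(p.2.1, p.2.2.1) ∨ e = s(p.2.2.1, p.2.2.2))) := by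
  classical
  by_cases hΔ0 : G.maxDegree = 0
  · refine ⟨0, fun i => ∅, Nat.zero_le _, fun i => i.elim0, fun i => i.elim0, ?_⟩
    intro e he
    exfalso
    induction e using Sym2.ind with
    | _ u v =>
      rw [SimpleGraph.mem_edgeSet] at he
      have h1 : 0 < G.degree u := by
        rw [SimpleGraph.degree_pos_iff_exists_adj]
        exact ⟨v, he⟩
      have h2 := G.degree_le_maxDegree u
      omega
  have hΔ : 1 ≤ G.maxDegree := Nat.pos_of_ne_zero hΔ0
  set Δ := G.maxDegree with hΔdef
  -- disjointness helpers
  have hAB : ∀ x, x ∈ A → x ∈ B → False := fun x hx hy =>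
    Finset.disjoint_left.1 hdisj hx hy
  have hWingA : ∀ b ∈ B, ∀ a, G.Adj b a → a ∈ A := by
    intro b hb a hab
    rcases hbip b a hab with ⟨h1, _⟩ | ⟨_, h2⟩
    · exact absurd hb (fun h => hAB b h1 h)
    · exact h2
  -- pairing of neighborhoods
  have key : ∀ b : V, ∃ P : Finset (V × V), b ∈ B →
      ((∀ p ∈ P, p.1 ∈ G.neighborFinset b ∧ p.2 ∈ G.neighborFinset b ∧ p.1 ≠ p.2) ∧
       (∀ x ∈ G.neighborFinset b, ∃! p : V × V, p ∈ P ∧ (x = p.1 ∨ x = p.2)) ∧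
       (G.neighborFinset b).card = 2 * P.card) := by
    intro b
    by_cases hb : b ∈ B
    · obtain ⟨P, h1, h2, h3⟩ := pair_decomp (G.neighborFinset b)
        (by rw [G.card_neighborFinset_eq_degree]; exact heven b hb)
      exact ⟨P, fun _ => ⟨h1, h2, h3⟩⟩
    · exact ⟨∅, fun h => absurd h hb⟩
  choose P hP using key
  set S : Finset (V × V × V) :=
    Finset.univ.filter (fun t => t.2.1 ∈ B ∧ (t.1, t.2.2) ∈ P t.2.1) with hSdef
  have hSmem : ∀ t : V × V × V, t ∈ S ↔ t.2.1 ∈ B ∧ (t.1, t.2.2) ∈ P t.2.1 := by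
    intro t; simp [hSdef]
  -- seagull structure
  have hSea : ∀ t ∈ S, t.1 ∈ A ∧ t.2.2 ∈ A ∧ t.2.1 ∈ B ∧
      G.Adj t.1 t.2.1 ∧ G.Adj t.2.1 t.2.2 ∧ t.1 ≠ t.2.2 := by
    intro t ht
    rw [hSmem] at ht
    obtain ⟨hb, hp⟩ := ht
    obtain ⟨h1, h2, h3⟩ := (hP t.2.1 hb).1 _ hp
    rw [SimpleGraph.mem_neighborFinset] at h1 h2
    exact ⟨hWingA _ hb _ h1, hWingA _ hb _ h2, hb, h1.symm, h2, h3⟩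
  -- vertex occurrence bound
  have hcnt : ∀ v : V,
      (S.filter fun t => v = t.1 ∨ v = t.2.1 ∨ v = t.2.2).card ≤ Δ := by
    intro v
    rcases hcover v with hvA | hvB
    · have hmap : ∀ t ∈ (S.filter fun t => v = t.1 ∨ v = t.2.1 ∨ v = t.2.2),
          (fun t : V × V × V => t.2.1) t ∈ G.neighborFinset v := by
        intro t ht
        rw [Finset.mem_filter] at ht
        obtain ⟨htS, hv⟩ := ht
        obtain ⟨_, _, hbt, hadj1, hadj2, _⟩ := hSea t htS
        rw [SimpleGraph.mem_neighborFinset]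
        rcases hv with rfl | rfl | rfl
        · exact hadj1
        · exact absurd hvA (fun h => hAB _ h hbt)
        · exact hadj2.symm
      have hinj : Set.InjOn (fun t : V × V × V => t.2.1)
          (S.filter fun t => v = t.1 ∨ v = t.2.1 ∨ v = t.2.2) := by
        intro t ht t' ht' heq
        simp only [Finset.coe_filter, Set.mem_setOf_eq] at ht ht'
        obtain ⟨htS, hv⟩ := ht
        obtain ⟨htS', hv'⟩ := ht'
        rw [hSmem] at htS htS'
        obtain ⟨hb, hq⟩ := htS
        obtain ⟨hb', hq'⟩ := htS'
        simp only at heq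
        have hvb : v ∈ G.neighborFinset t.2.1 := by
          have h := hmap t (Finset.mem_filter.2 ⟨(hSmem t).2 ⟨hb, hq⟩, hv⟩)
          rw [SimpleGraph.mem_neighborFinset] at h ⊢
          exact h.symm
        obtain ⟨q, hquniq⟩ := (hP t.2.1 hb).2.1 v hvb
        have hvw : v = t.1 ∨ v = t.2.2 := by
          rcases hv with h | h | h
          · exact Or.inl h
          · exact absurd hvA (fun hh => hAB _ hh (h ▸ hb))
          · exact Or.inr h
        have hvw' : v = t'.1 ∨ v = t'.2.2 := by
          rcases hv' with h | h | h
          · exact Or.inl h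
          · exact absurd hvA (fun hh => hAB _ hh (h ▸ hb'))
          · exact Or.inr h
        have e1 : (t.1, t.2.2) = q := hquniq.2 _ ⟨hq, by simpa using hvw⟩
        have e2 : (t'.1, t'.2.2) = q := hquniq.2 _ ⟨by rw [← heq] at hq'; exact hq', by simpa using hvw'⟩
        have h12 : (t.1, t.2.2) = (t'.1, t'.2.2) := e1.trans e2.symm
        simp only [Prod.mk.injEq] at h12
        exact Prod.ext h12.1 (Prod.ext heq h12.2)
      calc (S.filter fun t => v = t.1 ∨ v = t.2.1 ∨ v = t.2.2).card
          ≤ (G.neighborFinset v).card := Finset.card_le_card_of_injOn _ hmap hinj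
        _ = G.degree v := G.card_neighborFinset_eq_degree v
        _ ≤ Δ := G.degree_le_maxDegree v
    · have hsub : (S.filter fun t => v = t.1 ∨ v = t.2.1 ∨ v = t.2.2)
          ⊆ (P v).image (fun p : V × V => (p.1, v, p.2)) := by
        intro t ht
        rw [Finset.mem_filter] at ht
        obtain ⟨htS, hv⟩ := ht
        obtain ⟨ha1, ha2, hbt, _, _, _⟩ := hSea t htS
        have hvm : v = t.2.1 := by
          rcases hv with h | h | h
          · exact absurd ha1 (fun hh => hAB _ (h ▸ hh) hvB)
          · exact h
          · exact absurd ha2 (fun hh => hAB _ (h ▸ hh) hvB)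
        rw [Finset.mem_image]
        refine ⟨(t.1, t.2.2), ?_, ?_⟩
        · rw [hSmem] at htS; exact hvm ▸ htS.2
        · exact Prod.ext rfl (Prod.ext hvm rfl)
      have h2 : 2 * (P v).card = G.degree v := by
        rw [← G.card_neighborFinset_eq_degree]
        exact ((hP v hvB).2.2).symm
      have h3 := G.degree_le_maxDegree v
      calc (S.filter fun t => v = t.1 ∨ v = t.2.1 ∨ v = t.2.2).card
          ≤ ((P v).image (fun p : V × V => (p.1, v, p.2))).card := Finset.card_le_card hsub
        _ ≤ (P v).card := Finset.card_image_le
        _ ≤ Δ := by omega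
  -- conflict relation
  set R : (V × V × V) → (V × V × V) → Prop := fun t t' =>
    ¬ Disjoint ({t.1, t.2.1, t.2.2} : Finset V) ({t'.1, t'.2.1, t'.2.2} : Finset V)
    with hRdef
  have hsym : ∀ a b, R a b → R b a := by
    intro a b h hd
    exact h hd.symm
  have hconf : ∀ t ∈ S, (S.filter fun t' => t' ≠ t ∧ R t t').card < 3 * Δ := by
    intro t ht
    have hsub : (S.filter fun t' => t' ≠ t ∧ R t t') ⊆
        (((S.filter fun t' => t.1 = t'.1 ∨ t.1 = t'.2.1 ∨ t.1 = t'.2.2) ∪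
          (S.filter fun t' => t.2.1 = t'.1 ∨ t.2.1 = t'.2.1 ∨ t.2.1 = t'.2.2)) ∪
          (S.filter fun t' => t.2.2 = t'.1 ∨ t.2.2 = t'.2.1 ∨ t.2.2 = t'.2.2)).erase t := by
      intro t' ht'
      rw [Finset.mem_filter] at ht'
      obtain ⟨htS', hne, hR⟩ := ht'
      rw [Finset.mem_erase]
      refine ⟨hne, ?_⟩
      rw [hRdef] at hR
      rw [Finset.not_disjoint_iff] at hR
      obtain ⟨x, hx1, hx2⟩ := hR
      simp only [Finset.mem_insert, Finset.mem_singleton] at hx1 hx2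
      rw [Finset.mem_union, Finset.mem_union]
      rcases hx1 with rfl | rfl | rfl
      · exact Or.inl (Or.inl (Finset.mem_filter.2 ⟨htS', hx2⟩))
      · exact Or.inl (Or.inr (Finset.mem_filter.2 ⟨htS', hx2⟩))
      · exact Or.inr (Finset.mem_filter.2 ⟨htS', hx2⟩)
    have htmem : t ∈ ((S.filter fun t' => t.1 = t'.1 ∨ t.1 = t'.2.1 ∨ t.1 = t'.2.2) ∪
          (S.filter fun t' => t.2.1 = t'.1 ∨ t.2.1 = t'.2.1 ∨ t.2.1 = t'.2.2)) ∪
          (S.filter fun t' => t.2.2 = t'.1 ∨ t.2.2 = t'.2.1 ∨ t.2.2 = t'.2.2) := by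
      rw [Finset.mem_union]
      exact Or.inl (Finset.mem_union.2 (Or.inl (Finset.mem_filter.2 ⟨ht, Or.inl rfl⟩)))
    have hcard := Finset.card_le_card hsub
    rw [Finset.card_erase_of_mem htmem] at hcard
    have hu1 := Finset.card_union_le
      ((S.filter fun t' => t.1 = t'.1 ∨ t.1 = t'.2.1 ∨ t.1 = t'.2.2) ∪
       (S.filter fun t' => t.2.1 = t'.1 ∨ t.2.1 = t'.2.1 ∨ t.2.1 = t'.2.2))
      (S.filter fun t' => t.2.2 = t'.1 ∨ t.2.2 = t'.2.1 ∨ t.2.2 = t'.2.2)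
    have hu2 := Finset.card_union_le
      (S.filter fun t' => t.1 = t'.1 ∨ t.1 = t'.2.1 ∨ t.1 = t'.2.2)
      (S.filter fun t' => t.2.1 = t'.1 ∨ t.2.1 = t'.2.1 ∨ t.2.1 = t'.2.2)
    have b1 := hcnt t.1
    have b2 := hcnt t.2.1
    have b3 := hcnt t.2.2
    omega
  obtain ⟨c, hc1, hc2⟩ := greedy_color R hsym (3 * Δ) S hconf
  refine ⟨3 * Δ, fun i => S.filter (fun t => c t = i.1), le_refl _, ?_, ?_, ?_⟩
  · intro i s hs
    exact hSea s (Finset.mem_filter.1 hs).1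
  · intro i s hs s' hs' hne x hx hx'
    rw [Finset.mem_filter] at hs hs'
    have hR : R s s' := Finset.not_disjoint_iff.2 ⟨x, hx, hx'⟩
    exact hc2 s hs.1 s' hs'.1 hne hR (hs.2.trans hs'.2.symm)
  · intro e he
    have claim : ∀ a b : V, a ∈ A → b ∈ B → G.Adj a b →
        ∃! p : Fin (3 * Δ) × (V × V × V),
          p.2 ∈ S.filter (fun t => c t = p.1.1) ∧
          (s(a, b) = s(p.2.1, p.2.2.1) ∨ s(a, b) = s(p.2.2.1, p.2.2.2)) := by
      intro a b ha hb hab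
      have hanb : a ∈ G.neighborFinset b := by
        rw [SimpleGraph.mem_neighborFinset]; exact hab.symm
      obtain ⟨q, ⟨hqP, hqa⟩, huq⟩ := (hP b hb).2.1 a hanb
      have htS : (q.1, b, q.2) ∈ S := (hSmem _).2 ⟨hb, hqP⟩
      have hct : c (q.1, b, q.2) < 3 * Δ := hc1 _ htS
      refine ⟨(⟨c (q.1, b, q.2), hct⟩, (q.1, b, q.2)), ⟨?_, ?_⟩, ?_⟩
      · exact Finset.mem_filter.2 ⟨htS, rfl⟩
      · rcases hqa with rfl | h
        · exact Or.inl rfl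
        · right
          rw [h, Sym2.eq_swap]
      · rintro ⟨j, t'⟩ ⟨hmem, hcov⟩
        rw [Finset.mem_filter] at hmem
        obtain ⟨ht'S, hcj⟩ := hmem
        obtain ⟨ha1, ha2, hbt, _, _, _⟩ := hSea t' ht'S
        have hq' : (t'.1, t'.2.2) ∈ P t'.2.1 := ((hSmem t').1 ht'S).2
        have hmid : t'.2.1 = b ∧ (a = t'.1 ∨ a = t'.2.2) := by
          rcases hcov with hc' | hc'
          · rw [Sym2.eq_iff] at hc'
            rcases hc' with ⟨h1, h2⟩ | ⟨h1, h2⟩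
            · exact ⟨h2.symm, Or.inl h1⟩
            · exact absurd ha (fun hh => hAB a hh (by rw [h1]; exact hbt))
          · rw [Sym2.eq_iff] at hc'
            rcases hc' with ⟨h1, h2⟩ | ⟨h1, h2⟩
            · exact absurd ha (fun hh => hAB a hh (by rw [h1]; exact hbt))
            · exact ⟨h2.symm, Or.inr h1⟩
        obtain ⟨hmid1, hwing⟩ := hmid
        have hq'' : (t'.1, t'.2.2) ∈ P b := by rw [← hmid1]; exact hq'
        have hqq : (t'.1, t'.2.2) = q := huq _ ⟨hq'', by simpa using hwing⟩
        have e1 : t'.1 = q.1 := by rw [← hqq]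
        have e2 : t'.2.2 = q.2 := by rw [← hqq]
        have ht'eq : t' = (q.1, b, q.2) := Prod.ext e1 (Prod.ext hmid1 e2)
        subst ht'eq
        exact Prod.ext (Fin.ext hcj.symm) rfl
    induction e using Sym2.ind with
    | _ u v =>
      rw [SimpleGraph.mem_edgeSet] at he
      rcases hbip u v he with ⟨hu, hv⟩ | ⟨hu, hv⟩
      · exact claim u v hu hv he
      · rw [Sym2.eq_swap (a := u) (b := v)]
        exact claim v u hv hu he.symm
end

section
/- Let 1/n ≪ β ≪ α, γ ≤ 1. Let G be a (β, α)-dense graph on n vertices and U ⊆ V(G) with |U| ≥ γn. Then the induced subgraph G[U] is a robust (αβ, 2β/γ)-expander. -/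
set_option maxRecDepth 8000
set_option maxHeartbeats 1000000


/-- Proposition 3.3: for `1/n ≪ β ≪ α, γ ≤ 1`, any induced subgraph on at least `γn`
vertices of a `(β, α)`-dense graph on `n` vertices is a robust `(αβ, 2β/γ)`-expander. -/
theorem stmt_11 :
    ∀ α γ : ℝ, 0 < α → α ≤ 1 → 0 < γ → γ ≤ 1 →
    ∃ β₀ : ℝ, 0 < β₀ ∧ ∀ β : ℝ, 0 < β → β ≤ β₀ →
    ∃ N : ℕ, ∀ n : ℕ, N ≤ n →
    ∀ (V : Type) [Fintype V] [DecidableEq V] (G : SimpleGraph V) [DecidableRel G.Adj],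
      Fintype.card V = n →
      -- `G` is `(β, α)`-dense (ordered-pair edge count, so edges inside the
      -- intersection are counted twice)
      (∀ U W : Finset V, β * (n : ℝ) ≤ (U.card : ℝ) → β * (n : ℝ) ≤ (W.card : ℝ) →
        α * ((U.card : ℝ) * (W.card : ℝ)) ≤
          ((((U ×ˢ W).filter fun p => G.Adj p.1 p.2).card : ℝ))) →
      ∀ U : Finset V, γ * (n : ℝ) ≤ (U.card : ℝ) →
        -- `G[U]` is a robust `(αβ, 2β/γ)`-expander
        ∀ S ⊆ U, (2 * β / γ) * (U.card : ℝ) ≤ (S.card : ℝ) →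
          (S.card : ℝ) ≤ (1 - 2 * β / γ) * (U.card : ℝ) →
          (S.card : ℝ) + (α * β) * (U.card : ℝ) ≤
            (((U.filter fun v =>
              (α * β) * (U.card : ℝ) ≤ ((S.filter fun x => G.Adj v x).card : ℝ)).card : ℝ)) := by
  intro α γ hα hα1 hγ hγ1
  refine ⟨1, one_pos, fun β hβ hβ1 => ⟨1, fun n hn V _ _ G _ hcard hdense U hU S hSU hS1 hS2 => ?_⟩⟩
  have hn1 : (1:ℝ) ≤ n := by exact_mod_cast hn
  have hn'n : (U.card : ℝ) ≤ n := by
    have := Finset.card_le_univ U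
    rw [← hcard]; exact_mod_cast this
  have hratio : 2 * β / γ * (γ * n) = 2 * β * n := by field_simp
  have hSn : 2 * β * n ≤ (S.card : ℝ) := by
    have h1 : 2 * β / γ * (γ * n) ≤ 2 * β / γ * (U.card : ℝ) :=
      mul_le_mul_of_nonneg_left hU (by positivity)
    linarith [hratio ▸ h1]
  have hsplit : (U.filter fun v =>
        (α * β) * (U.card : ℝ) ≤ ((S.filter fun x => G.Adj v x).card : ℝ)).card
      + (U.filter fun v =>
        ¬ ((α * β) * (U.card : ℝ) ≤ ((S.filter fun x => G.Adj v x).card : ℝ))).card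
      = U.card :=
    Finset.card_filter_add_card_filter_not _
  set B := U.filter fun v =>
      ¬ ((α * β) * (U.card : ℝ) ≤ ((S.filter fun x => G.Adj v x).card : ℝ)) with hB
  have hBlt : (B.card : ℝ) < β * n := by
    by_contra h
    push_neg at h
    have hBpos : 0 < B.card := by
      have : (0:ℝ) < (B.card : ℝ) := lt_of_lt_of_le (by positivity) h
      exact_mod_cast this
    have hBne : B.Nonempty := Finset.card_pos.mp hBpos
    have hd := hdense B S h (le_trans (by nlinarith) hSn)
    have hcount : (((B ×ˢ S).filter fun p => G.Adj p.1 p.2).card)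
        = ∑ v ∈ B, (S.filter fun x => G.Adj v x).card := by
      rw [Finset.card_filter, Finset.sum_product]
      exact Finset.sum_congr rfl fun v _ => (Finset.card_filter _ _).symm
    have hsum : (∑ v ∈ B, ((S.filter fun x => G.Adj v x).card : ℝ))
        < ∑ _v ∈ B, (α * β) * (U.card : ℝ) := by
      apply Finset.sum_lt_sum_of_nonempty hBne
      intro v hv
      have := (Finset.mem_filter.mp hv).2
      exact lt_of_not_ge this
    rw [hcount] at hd
    push_cast at hd
    rw [Finset.sum_const, nsmul_eq_mul] at hsum
    have hβU : β * (U.card : ℝ) ≤ (S.card : ℝ) := by nlinarith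
    nlinarith [mul_nonneg hα.le (Nat.cast_nonneg B.card)]
  have hRN : ((U.filter fun v =>
      (α * β) * (U.card : ℝ) ≤ ((S.filter fun x => G.Adj v x).card : ℝ)).card : ℝ)
      = (U.card : ℝ) - (B.card : ℝ) := by
    have hc : ((U.filter fun v =>
        (α * β) * (U.card : ℝ) ≤ ((S.filter fun x => G.Adj v x).card : ℝ)).card : ℝ)
        + (B.card : ℝ) = (U.card : ℝ) := by exact_mod_cast hsplit
    linarith
  rw [hRN]
  have h2βn : 2 * β * n ≤ 2 * β / γ * (U.card : ℝ) := by
    have h1 : 2 * β / γ * (γ * n) ≤ 2 * β / γ * (U.card : ℝ) :=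
      mul_le_mul_of_nonneg_left hU (by positivity)
    linarith [hratio ▸ h1]
  have hαβ : (α * β) * (U.card : ℝ) ≤ β * n := by
    have h1 : (α * β) * (U.card : ℝ) ≤ 1 * β * (U.card : ℝ) := by
      have := mul_nonneg hβ.le (Nat.cast_nonneg U.card)
      nlinarith
    nlinarith
  nlinarith
end

section
/- Let 1/n ≪ β ≪ α ≤ 1 and let G be a (β, α)-dense graph on n vertices with minimum degree at least αn. Then G contains a spanning Eulerian subgraph G' (every vertex of G' has even degree and G' has a decomposition into cycles on its non-isolated part) such that the graph of removed edges G − E(G') has maximum degree at most 3; in particular at most 3n/2 edges are removed. -/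
/-!
Let `T` be the set of odd-degree vertices of `G`. It suffices to find `J ≤ G` of maximum degree
at most 3 whose odd-degree vertices are exactly `T`, and to take `G' = G \ J`.

Greedily match vertices of `T` along edges of `G`; the unmatched rest `R` is independent, so
density forces `|R| ≤ βn`. Then join the vertices of `R` in pairs `u, w` by paths `u x y w` with
fresh inner vertices: at most `2βn` vertices are used at any time, so `x ∈ N(u)` and `y ∈ N(w)`
still range over sets of size `βn`, and density provides an edge `xy`. Each edge is added as a
symmetric difference, which flips the degree parity at its two ends whatever `J` already
contains; so a path flips parity exactly at `u` and `w` and raises degrees by at most 2.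
-/

open Finset
open scoped symmDiff

theorem Set.ncard_symmDiff_singleton {α : Type*} {s : Set α} (hs : s.Finite) (b : α) :
    (s ∆ {b}).ncard + 1 = s.ncard ∨ (s ∆ {b}).ncard = s.ncard + 1 := by
  by_cases hb : b ∈ s
  · have : s ∆ {b} = s \ {b} := by ext; grind
    rw [this, Set.ncard_sdiff_singleton_add_one hb hs]
    exact Or.inl rfl
  · have : s ∆ {b} = insert b s := by ext; grind
    rw [this, Set.ncard_insert_of_notMem hb hs]
    exact Or.inr rfl

namespace SimpleGraph

section Toggle

variable {V : Type*} (J : SimpleGraph V) {a b v : V}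

theorem neighborSet_symmDiff (H : SimpleGraph V) (v : V) :
    (J ∆ H).neighborSet v = J.neighborSet v ∆ H.neighborSet v := by
  ext; simp [symmDiff_def]

theorem neighborSet_symmDiff_edge_of_ne (hva : v ≠ a) (hvb : v ≠ b) :
    (J ∆ edge a b).neighborSet v = J.neighborSet v := by
  ext; simp [neighborSet_symmDiff, Set.mem_symmDiff, edge_adj, hva, hvb]

theorem neighborSet_symmDiff_edge_left (hab : a ≠ b) :
    (J ∆ edge a b).neighborSet a = J.neighborSet a ∆ {b} := by
  rw [neighborSet_symmDiff]
  congr 1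
  ext
  grind [mem_neighborSet]

variable {u x y w : V}

theorem neighborSet_symmDiff_path_of_ne (hvu : v ≠ u) (hvx : v ≠ x) (hvy : v ≠ y) (hvw : v ≠ w) :
    (J ∆ edge u x ∆ edge x y ∆ edge y w).neighborSet v = J.neighborSet v := by
  rw [neighborSet_symmDiff_edge_of_ne _ hvy hvw, neighborSet_symmDiff_edge_of_ne _ hvx hvy,
    neighborSet_symmDiff_edge_of_ne _ hvu hvx]

theorem symmDiff_edge_le {G : SimpleGraph V} (hJ : J ≤ G) (h : G.Adj a b) : J ∆ edge a b ≤ G :=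
  symmDiff_le_sup.trans (sup_le hJ ((edge_le_iff G).mpr (.inr h)))

variable [Finite V]

theorem ncard_neighborSet_symmDiff_edge (hab : a ≠ b) (hv : v = a ∨ v = b) :
    ((J ∆ edge a b).neighborSet v).ncard + 1 = (J.neighborSet v).ncard ∨
      ((J ∆ edge a b).neighborSet v).ncard = (J.neighborSet v).ncard + 1 := by
  obtain rfl | rfl := hv
  · rw [neighborSet_symmDiff_edge_left J hab]
    exact Set.ncard_symmDiff_singleton (Set.toFinite _) b
  · rw [edge_comm, neighborSet_symmDiff_edge_left J hab.symm]
    exact Set.ncard_symmDiff_singleton (Set.toFinite _) a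

theorem odd_ncard_neighborSet_symmDiff_edge (hab : a ≠ b) (v : V) :
    Odd ((J ∆ edge a b).neighborSet v).ncard ↔
      (Odd (J.neighborSet v).ncard ↔ v ≠ a ∧ v ≠ b) := by
  by_cases hv : v = a ∨ v = b
  · have : ¬ (v ≠ a ∧ v ≠ b) := by tauto
    simp only [this, iff_false]
    rcases J.ncard_neighborSet_symmDiff_edge hab hv with h | h <;> grind
  · rw [not_or] at hv
    simp [neighborSet_symmDiff_edge_of_ne J hv.1 hv.2, hv]

theorem ncard_neighborSet_symmDiff_edge_le (hab : a ≠ b) (v : V) :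
    ((J ∆ edge a b).neighborSet v).ncard ≤ (J.neighborSet v).ncard + 1 := by
  by_cases hv : v = a ∨ v = b
  · rcases J.ncard_neighborSet_symmDiff_edge hab hv with h | h <;> omega
  · rw [not_or] at hv
    rw [neighborSet_symmDiff_edge_of_ne J hv.1 hv.2]
    omega

theorem odd_ncard_neighborSet_symmDiff_path (hux : u ≠ x) (hxy : x ≠ y) (hyw : y ≠ w)
    (huy : u ≠ y) (hxw : x ≠ w) (huw : u ≠ w) (v : V) :
    Odd ((J ∆ edge u x ∆ edge x y ∆ edge y w).neighborSet v).ncard ↔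
      (Odd (J.neighborSet v).ncard ↔ v ≠ u ∧ v ≠ w) := by
  simp only [odd_ncard_neighborSet_symmDiff_edge _ hux, odd_ncard_neighborSet_symmDiff_edge _ hxy,
    odd_ncard_neighborSet_symmDiff_edge _ hyw]
  grind

theorem ncard_neighborSet_symmDiff_path_le (hux : u ≠ x) (hxy : x ≠ y) (hyw : y ≠ w)
    (huy : u ≠ y) (hxw : x ≠ w) (v : V) :
    ((J ∆ edge u x ∆ edge x y ∆ edge y w).neighborSet v).ncard ≤ (J.neighborSet v).ncard + 2 := by
  have h₁ := J.ncard_neighborSet_symmDiff_edge_le hux v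
  have h₂ := (J ∆ edge u x).ncard_neighborSet_symmDiff_edge_le hxy v
  have h₃ := (J ∆ edge u x ∆ edge x y).ncard_neighborSet_symmDiff_edge_le hyw v
  by_cases hvyw : v = y ∨ v = w
  · obtain rfl | rfl := hvyw
    · rw [neighborSet_symmDiff_edge_of_ne _ huy.symm hxy.symm] at h₂
      omega
    · rw [neighborSet_symmDiff_edge_of_ne _ hxw.symm hyw.symm] at h₃
      omega
  · rw [not_or] at hvyw
    rw [neighborSet_symmDiff_edge_of_ne _ hvyw.1 hvyw.2]
    omega

theorem ncard_neighborSet_symmDiff_path_le_three (hux : u ≠ x) (hxy : x ≠ y) (hyw : y ≠ w)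
    (huy : u ≠ y) (hxw : x ≠ w) (h3 : ∀ v, (J.neighborSet v).ncard ≤ 3)
    (hu : (J.neighborSet u).ncard ≤ 1) (hx : (J.neighborSet x).ncard ≤ 1)
    (hy : (J.neighborSet y).ncard ≤ 1) (hw : (J.neighborSet w).ncard ≤ 1) (v : V) :
    ((J ∆ edge u x ∆ edge x y ∆ edge y w).neighborSet v).ncard ≤ 3 := by
  by_cases hv : v = u ∨ v = x ∨ v = y ∨ v = w
  · have := J.ncard_neighborSet_symmDiff_path_le hux hxy hyw huy hxw v
    obtain rfl | rfl | rfl | rfl := hv <;> omega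
  · simp only [not_or] at hv
    rw [neighborSet_symmDiff_path_of_ne J hv.1 hv.2.1 hv.2.2.1 hv.2.2.2]
    exact h3 v

end Toggle

section Degree

variable {V : Type*} (G : SimpleGraph V)

theorem ncard_neighborSet_eq_degree [Fintype V] [DecidableRel G.Adj] (v : V) :
    (G.neighborSet v).ncard = G.degree v := by
  rw [Set.ncard_eq_toFinset_card', Set.toFinset_card, card_neighborSet_eq_degree]

theorem two_mul_ncard_edgeSet_le [Fintype V] {k : ℕ} (h : ∀ v, (G.neighborSet v).ncard ≤ k) :
    2 * G.edgeSet.ncard ≤ k * Fintype.card V := by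
  classical
  calc 2 * G.edgeSet.ncard = ∑ v, G.degree v := by
        rw [sum_degrees_eq_twice_card_edges, Set.ncard_eq_toFinset_card', edgeFinset]
    _ ≤ ∑ _v : V, k := sum_le_sum fun v _ => (G.ncard_neighborSet_eq_degree v).symm ▸ h v
    _ = k * Fintype.card V := by rw [sum_const, card_univ, smul_eq_mul, mul_comm]

theorem even_ncard_neighborSet_sdiff [Finite V] {J : SimpleGraph V} (hJG : J ≤ G) {v : V}
    (h : Odd (J.neighborSet v).ncard ↔ Odd (G.neighborSet v).ncard) :
    Even ((G \ J).neighborSet v).ncard := by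
  have hsub : J.neighborSet v ⊆ G.neighborSet v := fun _ hw => hJG hw
  rw [neighborSet_sdiff, Set.ncard_sdiff hsub, Nat.even_sub (Set.ncard_le_ncard hsub)]
  rw [← Nat.not_odd_iff_even, ← Nat.not_odd_iff_even, h]

end Degree

/-- The `(β, α)`-density of the paper, with the size threshold `t = βn`; pairs are ordered. -/
def IsDenseAbove {V : Type*} (G : SimpleGraph V) [DecidableRel G.Adj] (t α : ℝ) : Prop :=
  ∀ U W : Finset V, t ≤ #U → t ≤ #W → α * ((#U : ℝ) * #W) ≤ #(G.interedges U W)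

section Dense

variable {V : Type*} {G : SimpleGraph V} [DecidableRel G.Adj] {t α : ℝ}

theorem IsDenseAbove.card_le_of_independent (hG : G.IsDenseAbove t α) (hα : 0 < α) (ht : 0 ≤ t)
    {R : Finset V} (hR : ∀ u ∈ R, ∀ w ∈ R, ¬G.Adj u w) : (#R : ℝ) ≤ t := by
  by_contra! hlt
  have hempty : G.interedges R R = ∅ := by
    ext ⟨u, w⟩
    simp only [mk_mem_interedges_iff, notMem_empty, iff_false, not_and]
    exact fun hu hw => hR u hu w hw
  have := hG R R hlt.le hlt.le
  rw [hempty, card_empty, Nat.cast_zero] at this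
  have : (0 : ℝ) < #R := ht.trans_lt hlt
  nlinarith [mul_pos hα (mul_pos this this)]

theorem IsDenseAbove.exists_adj (hG : G.IsDenseAbove t α) (hα : 0 < α) (ht : 0 < t)
    {A B : Finset V} (hA : t ≤ #A) (hB : t ≤ #B) : ∃ x ∈ A, ∃ y ∈ B, G.Adj x y := by
  have hpos : (0 : ℝ) < #(G.interedges A B) :=
    (mul_pos hα (mul_pos (ht.trans_le hA) (ht.trans_le hB))).trans_le (hG A B hA hB)
  obtain ⟨⟨x, y⟩, hxy⟩ := card_pos.mp (Nat.cast_pos.mp hpos)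
  rw [mk_mem_interedges_iff] at hxy
  exact ⟨x, hxy.1, y, hxy.2.1, hxy.2.2⟩

theorem IsDenseAbove.exists_path_avoiding [Fintype V] [DecidableEq V] (hG : G.IsDenseAbove t α)
    (hα : 0 < α) (ht : 0 < t) {d : ℝ} (hdeg : ∀ v, d ≤ G.degree v) {S : Finset V}
    (hS : #S + t ≤ d) (u w : V) :
    ∃ x y, G.Adj u x ∧ G.Adj x y ∧ G.Adj y w ∧ x ∉ S ∧ y ∉ S := by
  have hlarge : ∀ v, t ≤ #(G.neighborFinset v \ S) := fun v => by
    have : #(G.neighborFinset v) ≤ #(G.neighborFinset v \ S) + #S :=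
      card_le_card_sdiff_add_card
    have : (G.degree v : ℝ) ≤ #(G.neighborFinset v \ S) + #S := by exact_mod_cast this
    linarith [hdeg v]
  obtain ⟨x, hx, y, hy, hxy⟩ := hG.exists_adj hα ht (hlarge u) (hlarge w)
  rw [mem_sdiff, mem_neighborFinset] at hx hy
  exact ⟨x, y, hx.1, hxy, hy.1.symm, hx.2, hy.2⟩

end Dense

section Correction

variable {V : Type*} [Fintype V] [DecidableEq V] {G : SimpleGraph V}

theorem exists_matching_leaving_independent (T : Finset V) (hT : Even #T) :
    ∃ M ≤ G, ∃ R ⊆ T, Even #R ∧ (∀ u ∈ R, ∀ w ∈ R, ¬G.Adj u w) ∧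
      (∀ v, (M.neighborSet v).ncard ≤ 1) ∧ ∀ v, Odd (M.neighborSet v).ncard ↔ v ∈ T \ R := by
  induction T using Finset.strongInduction with
  | H T ih =>
  by_cases hedge : ∃ u ∈ T, ∃ w ∈ T, G.Adj u w
  · obtain ⟨u, hu, w, hw, huw⟩ := hedge
    have hpair : {u, w} ⊆ T := insert_subset hu (singleton_subset_iff.mpr hw)
    have hcard : #(T \ {u, w}) + 2 = #T := by
      rw [← card_pair huw.ne, card_sdiff_add_card_eq_card hpair]
    obtain ⟨M, hMG, R, hRT, hR, hRind, hM1, hModd⟩ :=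
      ih _ (sdiff_ssubset hpair (insert_nonempty u _)) ((Nat.even_add.mp (hcard ▸ hT)).mpr even_two)
    have hM0 : ∀ v, v = u ∨ v = w → (M.neighborSet v).ncard = 0 := fun v hv => by
      have hodd : ¬Odd (M.neighborSet v).ncard := by
        rw [hModd, mem_sdiff, mem_sdiff]
        obtain rfl | rfl := hv <;> simp
      have := hM1 v
      rw [Nat.not_odd_iff_even, Nat.even_iff] at hodd
      omega
    refine ⟨M ∆ edge u w, M.symmDiff_edge_le hMG huw,
      R, hRT.trans sdiff_subset, hR, hRind, fun v => ?_, fun v => ?_⟩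
    · by_cases hv : v = u ∨ v = w
      · have := M.ncard_neighborSet_symmDiff_edge_le huw.ne v
        have := hM0 v hv
        omega
      · rw [not_or] at hv
        rw [neighborSet_symmDiff_edge_of_ne _ hv.1 hv.2]
        exact hM1 v
    · have := @hRT u
      have := @hRT w
      rw [odd_ncard_neighborSet_symmDiff_edge _ huw.ne, hModd]
      simp only [mem_sdiff, mem_insert, mem_singleton]
      grind
  · refine ⟨⊥, bot_le, T, subset_rfl, hT, by simpa using hedge, by simp, by simp⟩

variable [DecidableRel G.Adj] {t α d : ℝ}

/-- `S` holds the vertices already used by paths; `#S + #R` never grows, as each path removes its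
ends from `R` and puts its two inner vertices into `S`. -/
theorem IsDenseAbove.exists_parity_correction (hG : G.IsDenseAbove t α) (hα : 0 < α) (ht : 0 < t)
    (hdeg : ∀ v, d ≤ G.degree v) {m : ℕ} (hm : m + t ≤ d) (R S : Finset V) (J : SimpleGraph V)
    (hJG : J ≤ G) (hR : Even #R) (hRS : R ⊆ S) (hsize : #S + #R ≤ m)
    (h3 : ∀ v, (J.neighborSet v).ncard ≤ 3) (hS : ∀ v ∉ S, (J.neighborSet v).ncard ≤ 1)
    (hRdeg : ∀ v ∈ R, (J.neighborSet v).ncard ≤ 1) :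
    ∃ J' ≤ G, (∀ v, (J'.neighborSet v).ncard ≤ 3) ∧
      ∀ v, Odd (J'.neighborSet v).ncard ↔ (Odd (J.neighborSet v).ncard ↔ v ∉ R) := by
  induction R using Finset.strongInduction generalizing S J with
  | H R ih =>
  obtain rfl | hne := R.eq_empty_or_nonempty
  · exact ⟨J, hJG, h3, by simp⟩
  have htwo : 1 < #R := by
    obtain ⟨k, hk⟩ := hR
    have := card_pos.mpr hne
    omega
  obtain ⟨u, hu, w, hw, huw⟩ := one_lt_card.mp htwo
  have hSd : (#S : ℝ) + t ≤ d := by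
    have : (#S : ℝ) ≤ m := by exact_mod_cast (by omega : #S ≤ m)
    linarith
  obtain ⟨x, y, hux, hxy, hyw, hxS, hyS⟩ := hG.exists_path_avoiding hα ht hdeg hSd u w
  have huy : u ≠ y := fun h => hyS (h ▸ hRS hu)
  have hxw : x ≠ w := fun h => hxS (h ▸ hRS hw)
  set J₁ := J ∆ edge u x ∆ edge x y ∆ edge y w
  have hsame : ∀ v ∉ ({u, x, y, w} : Finset V), J₁.neighborSet v = J.neighborSet v := by
    simp only [mem_insert, mem_singleton, not_or]
    exact fun v hv => J.neighborSet_symmDiff_path_of_ne hv.1 hv.2.1 hv.2.2.1 hv.2.2.2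
  have hJ₁3 : ∀ v, (J₁.neighborSet v).ncard ≤ 3 :=
    J.ncard_neighborSet_symmDiff_path_le_three hux.ne hxy.ne hyw.ne huy hxw h3
      (hRdeg u hu) (hS x hxS) (hS y hyS) (hRdeg w hw)
  have hpair : {u, w} ⊆ R := insert_subset hu (singleton_subset_iff.mpr hw)
  have hcardR : #(R \ {u, w}) + 2 = #R := by
    rw [← card_pair huw, card_sdiff_add_card_eq_card hpair]
  obtain ⟨J', hJ'G, hJ'3, hJ'odd⟩ := ih (R \ {u, w}) (sdiff_ssubset hpair (insert_nonempty u _))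
    ({x, y} ∪ S) J₁ (symmDiff_edge_le _ (symmDiff_edge_le _ (J.symmDiff_edge_le hJG hux) hxy) hyw)
    ((Nat.even_add.mp (hcardR ▸ hR)).mpr even_two)
    (sdiff_subset.trans (hRS.trans subset_union_right))
    (by have := (card_union_le {x, y} S).trans (Nat.add_le_add_right card_le_two _); omega) hJ₁3
    (fun v hv => by
      have : v ∉ ({u, x, y, w} : Finset V) := by grind
      exact hsame v this ▸ hS v (by grind))
    (fun v hv => by
      have : v ∉ ({u, x, y, w} : Finset V) := by grind
      exact hsame v this ▸ hRdeg v (mem_sdiff.mp hv).1)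
  refine ⟨J', hJ'G, hJ'3, fun v => ?_⟩
  rw [hJ'odd, J.odd_ncard_neighborSet_symmDiff_path hux.ne hxy.ne hyw.ne huy hxw huw]
  simp only [mem_sdiff, mem_insert, mem_singleton]
  grind

theorem IsDenseAbove.exists_subgraph_odd_iff (hG : G.IsDenseAbove t α) (hα : 0 < α) (ht : 0 < t)
    (hdeg : ∀ v, d ≤ G.degree v) (htd : 3 * t ≤ d) :
    ∃ J ≤ G, (∀ v, (J.neighborSet v).ncard ≤ 3) ∧
      ∀ v, Odd (J.neighborSet v).ncard ↔ Odd (G.neighborSet v).ncard := by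
  obtain ⟨M, hMG, R, hRT, hR, hRind, hM1, hModd⟩ :=
    exists_matching_leaving_independent (G := G) _ G.even_card_odd_degree_vertices
  have hRt := hG.card_le_of_independent hα ht.le hRind
  obtain ⟨J, hJG, hJ3, hJodd⟩ := hG.exists_parity_correction hα ht hdeg (m := 2 * #R)
    (by push_cast; linarith) R R M hMG hR subset_rfl (by omega)
    (fun v => (hM1 v).trans (by norm_num)) (fun v _ => hM1 v) (fun v _ => hM1 v)
  refine ⟨J, hJG, hJ3, fun v => ?_⟩
  have := @hRT v
  rw [hJodd, hModd, ncard_neighborSet_eq_degree, mem_sdiff]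
  simp only [mem_filter, mem_univ, true_and] at this ⊢
  tauto

end Correction

end SimpleGraph

/-- Proposition 3.4: for `1/n ≪ β ≪ α ≤ 1`, every `(β, α)`-dense graph `G` on `n`
vertices with `δ(G) ≥ αn` contains a spanning Eulerian subgraph `G'` (all degrees even)
with `Δ(G - E(G')) ≤ 3`; in particular at most `3n/2` edges are removed. -/
theorem stmt_12 :
    ∀ α : ℝ, 0 < α → α ≤ 1 →
    ∃ β₀ : ℝ, 0 < β₀ ∧ ∀ β : ℝ, 0 < β → β ≤ β₀ →
    ∃ N : ℕ, ∀ n : ℕ, N ≤ n →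
    ∀ (V : Type) [Fintype V] [DecidableEq V] (G : SimpleGraph V) [DecidableRel G.Adj],
      Fintype.card V = n →
      -- `G` is `(β, α)`-dense (ordered-pair count; edges in the intersection twice)
      (∀ U W : Finset V, β * (n : ℝ) ≤ (U.card : ℝ) → β * (n : ℝ) ≤ (W.card : ℝ) →
        α * ((U.card : ℝ) * (W.card : ℝ)) ≤
          ((((U ×ˢ W).filter fun p => G.Adj p.1 p.2).card : ℝ))) →
      (∀ v : V, α * (n : ℝ) ≤ (G.degree v : ℝ)) →
      ∃ G' : SimpleGraph V, G' ≤ G ∧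
        (∀ v : V, Even ((G'.neighborSet v).ncard)) ∧
        (∀ v : V, ((G \ G').neighborSet v).ncard ≤ 3) ∧
        (((G \ G').edgeSet.ncard : ℝ) ≤ 3 * (n : ℝ) / 2) := by
  intro α hα _
  refine ⟨α / 3, by positivity, fun β hβ hβα => ⟨1, fun n hn V _ _ G _ hcard hdense hdeg => ?_⟩⟩
  have ht : 0 < β * n := mul_pos hβ (by exact_mod_cast hn)
  have htd : 3 * (β * n) ≤ α * n := by nlinarith
  have hG : G.IsDenseAbove (β * n) α := hdense
  obtain ⟨J, hJG, hJ3, hJodd⟩ := hG.exists_subgraph_odd_iff hα ht hdeg htd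
  have hremoved : G \ (G \ J) = J := by rw [sdiff_sdiff_right_self, inf_of_le_right hJG]
  refine ⟨G \ J, sdiff_le, fun v => G.even_ncard_neighborSet_sdiff hJG (hJodd v), ?_, ?_⟩
  · rwa [hremoved]
  · have hedges : 2 * J.edgeSet.ncard ≤ 3 * n := hcard ▸ J.two_mul_ncard_edgeSet_le hJ3
    have : 2 * (J.edgeSet.ncard : ℝ) ≤ 3 * n := by exact_mod_cast hedges
    rw [hremoved]
    linarith
end
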